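/- arXiv:1502.05786 — 8 statements merged into one kernel-verified Lean document; each statement's English description precedes it below -/
import Mathlib

section
/- Suppose M ≥ 1 and for each j ∈ {1,…,M} we have positive constants Δⱼ and integers dⱼ ≥ 1, and nonincreasing sequences (P_k^{(j)})_{k≥0} with P_0^{(j)} = 1, P_k^{(j)} ∈ [0,1], satisfying the coupling identity ∑_{j=1}^M P_{k+1}^{(j)}/Δⱼ = ∏_{j=1}^M (P_k^{(j)})^{dⱼ} for all k ≥ 0, and suppose P_k^{(j)} → 0 as k → ∞ for each j. If d = ∑_j dⱼ ≥ 2, then each sequence (P_k^{(j)})_k decreases doubly exponentially: there exist L, κ > 0, 0 < ω < 1, θ > 1 such that P_k^{(j)} ≤ κ·ω^{θ^k} for all k ≥ L and all j. -/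
open Finset Filter

/-- Under the equilibrium coupling identity with `d = ∑ⱼ dⱼ ≥ 2` and
vanishing tails, each sequence `(P_k^{(j)})_k` decreases doubly exponentially. -/
theorem doubly_exponential_decay_of_coupling
    (M : ℕ) (hM : 1 ≤ M)
    (Δ : Fin M → ℝ) (d : Fin M → ℕ) (P : Fin M → ℕ → ℝ)
    (hΔ : ∀ j, 0 < Δ j) (hd : ∀ j, 1 ≤ d j)
    (hP0 : ∀ j, P j 0 = 1)
    (hPmem : ∀ j k, P j k ∈ Set.Icc (0 : ℝ) 1)
    (hPmono : ∀ j k, P j (k + 1) ≤ P j k)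
    (hcouple : ∀ k : ℕ, ∑ j, P j (k + 1) / Δ j = ∏ j, (P j k) ^ (d j))
    (hlim : ∀ j, Tendsto (fun k => P j k) atTop (nhds 0))
    (hdsum : 2 ≤ ∑ j, d j) :
    ∃ (L : ℕ) (κ ω θ : ℝ), 0 < L ∧ 0 < κ ∧ 0 < ω ∧ ω < 1 ∧ 1 < θ ∧
      ∀ k, L ≤ k → ∀ j, P j k ≤ κ * ω ^ (θ ^ (k : ℝ)) := by
  have hPnn : ∀ j k, 0 ≤ P j k := fun j k => (hPmem j k).1
  set Q : ℕ → ℝ := fun k => ∑ j, P j k with hQdef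
  have hQnn : ∀ k, 0 ≤ Q k := fun k => Finset.sum_nonneg fun j _ => hPnn j k
  have hPQ : ∀ j k, P j k ≤ Q k := fun j k =>
    Finset.single_le_sum (fun i _ => hPnn i k) (Finset.mem_univ j)
  set C : ℝ := max (∑ j, Δ j) 1 with hCdef
  have hC1 : (1 : ℝ) ≤ C := le_max_right _ _
  have hC0 : (0 : ℝ) < C := lt_of_lt_of_le one_pos hC1
  set D : ℕ := ∑ j, d j with hDdef
  -- the basic recursion with the full exponent
  have hQrec : ∀ k, Q (k + 1) ≤ C * Q k ^ D := by
    intro k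
    have hstep : ∀ j : Fin M, P j (k + 1) ≤ Δ j * ∏ i, (P i k) ^ (d i) := by
      intro j
      have h1 : P j (k + 1) / Δ j ≤ ∑ i, P i (k + 1) / Δ i :=
        Finset.single_le_sum (fun i _ => div_nonneg (hPnn i (k + 1)) (hΔ i).le)
          (Finset.mem_univ j)
      rw [hcouple k] at h1
      rw [div_le_iff₀ (hΔ j)] at h1
      linarith [h1]
    have h2 : Q (k + 1) ≤ (∑ j, Δ j) * ∏ i, (P i k) ^ (d i) := by
      calc Q (k + 1) ≤ ∑ j, Δ j * ∏ i, (P i k) ^ (d i) :=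
            Finset.sum_le_sum fun j _ => hstep j
        _ = (∑ j, Δ j) * ∏ i, (P i k) ^ (d i) := by rw [Finset.sum_mul]
    have hprodnn : (0 : ℝ) ≤ ∏ i, (P i k) ^ (d i) :=
      Finset.prod_nonneg fun i _ => pow_nonneg (hPnn i k) _
    have h3 : (∑ j, Δ j) * ∏ i, (P i k) ^ (d i) ≤ C * ∏ i, (P i k) ^ (d i) :=
      mul_le_mul_of_nonneg_right (le_max_left _ _) hprodnn
    have h4 : ∏ i, (P i k) ^ (d i) ≤ Q k ^ D := by
      have : ∏ i, (P i k) ^ (d i) ≤ ∏ i, (Q k) ^ (d i) :=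
        Finset.prod_le_prod (fun i _ => pow_nonneg (hPnn i k) _)
          (fun i _ => pow_le_pow_left₀ (hPnn i k) (hPQ i k) _)
      rwa [Finset.prod_pow_eq_pow_sum] at this
    calc Q (k + 1) ≤ C * ∏ i, (P i k) ^ (d i) := le_trans h2 h3
      _ ≤ C * Q k ^ D := mul_le_mul_of_nonneg_left h4 hC0.le
  -- Q tends to 0
  have hQlim : Tendsto Q atTop (nhds 0) := by
    have := tendsto_finset_sum (Finset.univ : Finset (Fin M)) (fun j _ => hlim j)
    simpa using this
  -- choose L
  have hev : ∀ᶠ k in atTop, Q k < 1 / (2 * C) := by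
    have hpos : (0 : ℝ) < 1 / (2 * C) := by positivity
    exact hQlim.eventually (gt_mem_nhds hpos)
  obtain ⟨N, hN⟩ := Filter.eventually_atTop.mp hev
  set L : ℕ := N + 1 with hLdef
  have hQL : Q L ≤ 1 / (2 * C) := (hN L (Nat.le_succ N)).le
  -- the doubly exponential bound on C * Q
  have key : ∀ n, C * Q (L + n) ≤ (1 / 2 : ℝ) ^ (2 ^ n) := by
    intro n
    induction n with
    | zero =>
      simp only [Nat.add_zero, pow_zero, pow_one]
      calc C * Q L ≤ C * (1 / (2 * C)) := mul_le_mul_of_nonneg_left hQL hC0.le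
        _ = 1 / 2 := by field_simp
    | succ n ih =>
      have hQn1 : Q (L + n) ≤ 1 := by
        have h1 : Q (L + n) ≤ C * Q (L + n) := le_mul_of_one_le_left (hQnn _) hC1
        have h2 : (1 / 2 : ℝ) ^ (2 ^ n) ≤ 1 :=
          pow_le_one₀ (by norm_num) (by norm_num)
        linarith [ih]
      have hpow : Q (L + n) ^ D ≤ Q (L + n) ^ 2 :=
        pow_le_pow_of_le_one (hQnn _) hQn1 hdsum
      have h5 : Q (L + n + 1) ≤ C * Q (L + n) ^ 2 :=
        le_trans (hQrec (L + n)) (mul_le_mul_of_nonneg_left hpow hC0.le)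
      have h6 : C * Q (L + n + 1) ≤ (C * Q (L + n)) ^ 2 := by
        have := mul_le_mul_of_nonneg_left h5 hC0.le
        calc C * Q (L + n + 1) ≤ C * (C * Q (L + n) ^ 2) := this
          _ = C * C * Q (L + n) ^ 2 := by ring
          _ = (C * Q (L + n)) ^ 2 := by ring
      have h7 : (C * Q (L + n)) ^ 2 ≤ ((1 / 2 : ℝ) ^ (2 ^ n)) ^ 2 :=
        pow_le_pow_left₀ (mul_nonneg hC0.le (hQnn _)) ih 2
      have h8 : ((1 / 2 : ℝ) ^ (2 ^ n)) ^ 2 = (1 / 2 : ℝ) ^ (2 ^ (n + 1)) := by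
        rw [← pow_mul, pow_succ]
      calc C * Q (L + (n + 1)) = C * Q (L + n + 1) := by ring_nf
        _ ≤ (C * Q (L + n)) ^ 2 := h6
        _ ≤ ((1 / 2 : ℝ) ^ (2 ^ n)) ^ 2 := h7
        _ = (1 / 2 : ℝ) ^ (2 ^ (n + 1)) := h8
  -- assemble the answer
  refine ⟨L, 1, (1 / 2 : ℝ) ^ ((2 : ℝ) ^ (-(L : ℝ))), 2, Nat.succ_pos N, one_pos,
    Real.rpow_pos_of_pos (by norm_num) _,
    Real.rpow_lt_one (by norm_num) (by norm_num)
      (Real.rpow_pos_of_pos (by norm_num) _),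
    one_lt_two, ?_⟩
  intro k hk j
  set n : ℕ := k - L with hndef
  have hkn : k = L + n := by omega
  have hQk : Q k ≤ (1 / 2 : ℝ) ^ (2 ^ n) := by
    have h1 : Q k ≤ C * Q k := le_mul_of_one_le_left (hQnn _) hC1
    have h2 := key n
    rw [← hkn] at h2
    linarith
  have hPk : P j k ≤ (1 / 2 : ℝ) ^ (2 ^ n) := le_trans (hPQ j k) hQk
  have hrw : ((1 / 2 : ℝ) ^ ((2 : ℝ) ^ (-(L : ℝ)))) ^ ((2 : ℝ) ^ (k : ℝ))
      = (1 / 2 : ℝ) ^ (2 ^ n) := by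
    rw [← Real.rpow_natCast (1 / 2 : ℝ) (2 ^ n),
      ← Real.rpow_mul (by norm_num : (0 : ℝ) ≤ 1 / 2),
      ← Real.rpow_add (by norm_num : (0 : ℝ) < 2)]
    congr 1
    have hexp : -(L : ℝ) + (k : ℝ) = (n : ℝ) := by
      rw [hkn]; push_cast; ring
    rw [hexp, Real.rpow_natCast]
    push_cast
    ring
  rw [one_mul, hrw]
  exact hPk
end

section
/- Under the hypotheses of the coupling identity with d = ∑_j dⱼ ≥ 2 and P_k^{(j)} → 0, defining P̂_k = max_j P_k^{(j)}: for all k and n ≥ 1, if δ := (P̂_k)^{d−1}·max_j Δⱼ < 1, then max_j P_{k+n}^{(j)} ≤ δ^{(d^n − 1)/(d−1)} · P̂_k. -/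
open Finset Filter

/-- With `P̂ₖ = max_j P_k^{(j)}` and `δ = P̂ₖ^{d−1}·maxⱼ Δⱼ < 1`, one has
`max_j P_{k+n}^{(j)} ≤ δ^{(dⁿ−1)/(d−1)}·P̂ₖ` for all `n ≥ 1`. -/
theorem iterated_contraction_of_coupling
    (M : ℕ) (hM : 1 ≤ M)
    (Δ : Fin M → ℝ) (d : Fin M → ℕ) (P : Fin M → ℕ → ℝ)
    (hΔ : ∀ j, 0 < Δ j) (hd : ∀ j, 1 ≤ d j)
    (hPmem : ∀ j k, P j k ∈ Set.Icc (0 : ℝ) 1)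
    (hPmono : ∀ j k, P j (k + 1) ≤ P j k)
    (hcouple : ∀ k : ℕ, ∑ j, P j (k + 1) / Δ j = ∏ j, (P j k) ^ (d j))
    (hdsum : 2 ≤ ∑ j, d j)
    (k n : ℕ) (hn : 1 ≤ n)
    (hδ : (⨆ j, P j k) ^ (∑ j, d j - 1) * (⨆ j, Δ j) < 1) :
    ∀ j, P j (k + n) ≤
      ((⨆ j, P j k) ^ (∑ j, d j - 1) * (⨆ j, Δ j)) ^
          (((∑ j, d j) ^ n - 1) / (∑ j, d j - 1)) * (⨆ j, P j k) := by
  have hM' : Nonempty (Fin M) := ⟨⟨0, hM⟩⟩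
  set D := ∑ j, d j with hD
  set Phat := ⨆ j, P j k with hPhat
  set Δhat := ⨆ j, Δ j with hΔhat
  set δ := Phat ^ (D - 1) * Δhat with hδdef
  have hbdd : ∀ m, BddAbove (Set.range fun j => P j m) :=
    fun m => Set.Finite.bddAbove (Set.finite_range _)
  have hbddΔ : BddAbove (Set.range Δ) := Set.Finite.bddAbove (Set.finite_range _)
  have hPle : ∀ j m, P j m ≤ ⨆ j, P j m := fun j m => le_ciSup (hbdd m) j
  have hΔle : ∀ j, Δ j ≤ Δhat := fun j => le_ciSup hbddΔ j
  have j0 : Fin M := Classical.arbitrary _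
  have hPhat0 : 0 ≤ Phat := le_trans (hPmem j0 k).1 (hPle j0 k)
  have hΔhat0 : 0 ≤ Δhat := le_trans (hΔ j0).le (hΔle j0)
  have hδ0 : 0 ≤ δ := mul_nonneg (pow_nonneg hPhat0 _) hΔhat0
  -- one-step bound
  have key : ∀ m (B : ℝ), 0 ≤ B → (∀ j, P j m ≤ B) → ∀ j, P j (m + 1) ≤ Δhat * B ^ D := by
    intro m B hB hPB j
    have h1 : P j (m + 1) / Δ j ≤ ∑ j', P j' (m + 1) / Δ j' :=
      Finset.single_le_sum (fun i _ => div_nonneg (hPmem i (m + 1)).1 (hΔ i).le) (mem_univ j)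
    have h3 : ∏ j', (P j' m) ^ (d j') ≤ ∏ j', B ^ (d j') :=
      Finset.prod_le_prod (fun i _ => pow_nonneg (hPmem i m).1 _)
        (fun i _ => pow_le_pow_left₀ (hPmem i m).1 (hPB i) _)
    have h4 : ∏ j', (B : ℝ) ^ (d j') = B ^ D := by
      rw [Finset.prod_pow_eq_pow_sum]
    have h5 : P j (m + 1) / Δ j ≤ B ^ D := by
      rw [← h4]; exact h1.trans ((hcouple m).le.trans h3)
    have h6 : P j (m + 1) ≤ B ^ D * Δ j := (div_le_iff₀ (hΔ j)).mp h5
    calc P j (m + 1) ≤ B ^ D * Δ j := h6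
      _ ≤ B ^ D * Δhat := mul_le_mul_of_nonneg_left (hΔle j) (pow_nonneg hB _)
      _ = Δhat * B ^ D := mul_comm _ _
  have hDpos : 1 ≤ D := by omega
  have hsplit : Phat ^ D = Phat ^ (D - 1) * Phat := by
    have : D = (D - 1) + 1 := by omega
    rw [this, pow_succ]
    simp
  -- geometric sum facts
  have geom : ∀ n, (D - 1) * ∑ i ∈ Finset.range n, D ^ i = D ^ n - 1 := by
    intro n
    induction n with
    | zero => simp
    | succ n ih =>
      rw [Finset.sum_range_succ, Nat.mul_add, ih, pow_succ]
      have h1 : 1 ≤ D ^ n := Nat.one_le_pow _ _ (by omega)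
      have h2 : (D - 1) * D ^ n = D ^ n * D - D ^ n := by
        rw [Nat.sub_mul, one_mul, Nat.mul_comm]
      rw [h2]
      have h3 : D ^ n ≤ D ^ n * D := Nat.le_mul_of_pos_right _ (by omega)
      omega
  have hdiv : ∀ n, (D ^ n - 1) / (D - 1) = ∑ i ∈ Finset.range n, D ^ i := by
    intro n
    rw [← geom n, Nat.mul_div_cancel_left _ (by omega : 0 < D - 1)]
  have asucc : ∀ n, ∑ i ∈ Finset.range (n + 1), D ^ i = D * (∑ i ∈ Finset.range n, D ^ i) + 1 := by
    intro n
    rw [Finset.sum_range_succ']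
    simp [pow_succ, Finset.mul_sum, mul_comm]
  -- main induction
  have main : ∀ n, 1 ≤ n → ∀ j, P j (k + n) ≤ δ ^ (∑ i ∈ Finset.range n, D ^ i) * Phat := by
    intro n hn
    induction n with
    | zero => omega
    | succ n ih =>
      rcases Nat.eq_zero_or_pos n with h0 | hpos
      · subst h0
        intro j
        have hk := key k Phat hPhat0 (fun j => hPle j k) j
        have he1 : ∑ i ∈ Finset.range (0 + 1), D ^ i = 1 := by simp
        rw [he1, pow_one]
        calc P j (k + 1) ≤ Δhat * Phat ^ D := hk
          _ = δ * Phat := by rw [hsplit, hδdef]; ring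
      · intro j
        have ihj := ih hpos
        set a := ∑ i ∈ Finset.range n, D ^ i with ha
        have hB : (0 : ℝ) ≤ δ ^ a * Phat := mul_nonneg (pow_nonneg hδ0 _) hPhat0
        have hk := key (k + n) (δ ^ a * Phat) hB ihj j
        have heq : Δhat * (δ ^ a * Phat) ^ D = δ ^ (D * a + 1) * Phat := by
          rw [mul_pow, ← pow_mul, hsplit, pow_succ, mul_comm a D, hδdef]
          ring
        have : P j (k + (n + 1)) ≤ δ ^ (D * a + 1) * Phat := by
          rw [← heq]
          have : k + (n + 1) = (k + n) + 1 := by omega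
          rw [this]
          exact hk
        rw [asucc]
        exact this
  intro j
  rw [hdiv]
  exact main n hn j
end

section
/- Let Δ₁, Δ₂ > 0 satisfy 1/Δ₁ + 1/Δ₂ > 1, and let d₁, d₂ ≥ 1 be integers. If ξ₁, ξ₂ ∈ [0,1] satisfy ξ₁/Δ₁ + ξ₂/Δ₂ = ξ₁^{d₁}·ξ₂^{d₂}, then ξ₁ = 0 and ξ₂ = 0. -/
/-- Under the stability condition `1/Δ₁ + 1/Δ₂ > 1`, the only solution
in `[0,1]²` of `ξ₁/Δ₁ + ξ₂/Δ₂ = ξ₁^{d₁}·ξ₂^{d₂}` is `ξ₁ = ξ₂ = 0`. -/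
theorem fixed_point_limit_zero
    (Δ₁ Δ₂ : ℝ) (hΔ₁ : 0 < Δ₁) (hΔ₂ : 0 < Δ₂)
    (hstab : 1 < 1 / Δ₁ + 1 / Δ₂)
    (d₁ d₂ : ℕ) (hd₁ : 1 ≤ d₁) (hd₂ : 1 ≤ d₂)
    (ξ₁ ξ₂ : ℝ) (hξ₁ : ξ₁ ∈ Set.Icc (0 : ℝ) 1) (hξ₂ : ξ₂ ∈ Set.Icc (0 : ℝ) 1)
    (heq : ξ₁ / Δ₁ + ξ₂ / Δ₂ = ξ₁ ^ d₁ * ξ₂ ^ d₂) :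
    ξ₁ = 0 ∧ ξ₂ = 0 := by
  obtain ⟨h10, h11⟩ := hξ₁
  obtain ⟨h20, h21⟩ := hξ₂
  -- RHS ≤ ξ₁ * ξ₂
  have hp1 : ξ₁ ^ d₁ ≤ ξ₁ := by
    calc ξ₁ ^ d₁ ≤ ξ₁ ^ 1 := pow_le_pow_of_le_one h10 h11 hd₁
    _ = ξ₁ := pow_one _
  have hp2 : ξ₂ ^ d₂ ≤ ξ₂ := by
    calc ξ₂ ^ d₂ ≤ ξ₂ ^ 1 := pow_le_pow_of_le_one h20 h21 hd₂
    _ = ξ₂ := pow_one _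
  have hRHS : ξ₁ ^ d₁ * ξ₂ ^ d₂ ≤ ξ₁ * ξ₂ :=
    mul_le_mul hp1 hp2 (pow_nonneg h20 _) h10
  -- LHS ≥ ξ₁ξ₂ (1/Δ₁ + 1/Δ₂)
  have hL1 : ξ₁ * ξ₂ * (1 / Δ₁) ≤ ξ₁ / Δ₁ := by
    rw [div_eq_mul_one_div ξ₁ Δ₁]
    have : ξ₁ * ξ₂ ≤ ξ₁ := by nlinarith
    exact mul_le_mul_of_nonneg_right this (by positivity)
  have hL2 : ξ₁ * ξ₂ * (1 / Δ₂) ≤ ξ₂ / Δ₂ := by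
    rw [div_eq_mul_one_div ξ₂ Δ₂]
    have : ξ₁ * ξ₂ ≤ ξ₂ := by nlinarith
    exact mul_le_mul_of_nonneg_right this (by positivity)
  have hmul0 : ξ₁ * ξ₂ = 0 := by nlinarith [mul_nonneg h10 h20]
  have hRHS0 : ξ₁ ^ d₁ * ξ₂ ^ d₂ = 0 := by
    rcases mul_eq_zero.mp hmul0 with h | h <;> simp [h, zero_pow (by omega : d₁ ≠ 0), zero_pow (by omega : d₂ ≠ 0)]
  rw [hRHS0] at heq
  have a1 : 0 ≤ ξ₁ / Δ₁ := div_nonneg h10 hΔ₁.le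
  have a2 : 0 ≤ ξ₂ / Δ₂ := div_nonneg h20 hΔ₂.le
  have e1 : ξ₁ / Δ₁ = 0 := by linarith
  have e2 : ξ₂ / Δ₂ = 0 := by linarith
  constructor
  · rcases div_eq_zero_iff.mp e1 with h | h
    · exact h
    · exact absurd h hΔ₁.ne'
  · rcases div_eq_zero_iff.mp e2 with h | h
    · exact h
    · exact absurd h hΔ₂.ne'
end

section
/- Let Δ₁, Δ₂ > 0 with 1/Δ₁ + 1/Δ₂ > 1, d₂ ≥ 1 an integer, and let a sequence (P_l)_{l≥0} satisfy P₀ = 1, P₁ = Δ₂(1 − 1/Δ₁), and P_{l+2} = P_{l+1} − Δ₂(P_l^{d₂} − P_{l+1}^{d₂}) for l ≥ 0. Then there exists l ≥ 1 with P_l < 0. -/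
/-- The sequence `P_l = P_l^{(2)}(1)` from the existence proof eventually
becomes negative: `P₀ = 1`, `P₁ = Δ₂(1 − 1/Δ₁)`,
`P_{l+2} = P_{l+1} − Δ₂(P_l^{d₂} − P_{l+1}^{d₂})`, under `1/Δ₁ + 1/Δ₂ > 1`. -/
theorem exists_negative_term
    (Δ₁ Δ₂ : ℝ) (hΔ₁ : 0 < Δ₁) (hΔ₂ : 0 < Δ₂)
    (hstab : 1 < 1 / Δ₁ + 1 / Δ₂)
    (d₂ : ℕ) (hd₂ : 1 ≤ d₂)
    (P : ℕ → ℝ) (hP0 : P 0 = 1) (hP1 : P 1 = Δ₂ * (1 - 1 / Δ₁))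
    (hrec : ∀ l : ℕ, P (l + 2) = P (l + 1) - Δ₂ * (P l ^ d₂ - P (l + 1) ^ d₂)) :
    ∃ l : ℕ, 1 ≤ l ∧ P l < 0 := by
  by_contra hcon
  push_neg at hcon
  have hnn : ∀ l, 0 ≤ P l := by
    intro l
    cases l with
    | zero => rw [hP0]; norm_num
    | succ n => exact hcon (n+1) (Nat.succ_le_succ (Nat.zero_le n))
  have hb2 : Δ₂ * (1 / Δ₂) = 1 := by field_simp
  have hP1lt : P 1 < 1 := by
    rw [hP1]
    nlinarith [mul_pos hΔ₂ (by linarith : (0:ℝ) < 1 / Δ₁ + 1 / Δ₂ - 1)]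
  -- antitone
  have hstep : ∀ n, P (n+1) ≤ P n := by
    intro n
    induction n with
    | zero => rw [hP0]; exact hP1lt.le
    | succ m ih =>
      have hpow : P (m+1) ^ d₂ ≤ P m ^ d₂ := pow_le_pow_left₀ (hnn (m+1)) ih d₂
      have := hrec m
      nlinarith [mul_nonneg hΔ₂.le (sub_nonneg.mpr hpow)]
  have hanti : Antitone P := antitone_nat_of_succ_le hstep
  -- closed form
  have hclosed : ∀ n, P (n+1) = P 1 - Δ₂ * (1 - P n ^ d₂) := by
    intro n
    induction n with
    | zero => rw [hP0]; ring
    | succ m ih =>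
      rw [hrec m, ih]; ring
  -- limit
  set β : ℝ := ⨅ n, P n with hβdef
  have hbdd : BddBelow (Set.range P) := ⟨0, by rintro x ⟨n, rfl⟩; exact hnn n⟩
  have hβ : Filter.Tendsto P Filter.atTop (nhds β) := tendsto_atTop_ciInf hanti hbdd
  have hβ0 : 0 ≤ β := le_ciInf hnn
  have hβle : β ≤ P 1 := ciInf_le hbdd 1
  have hβlt : β < 1 := lt_of_le_of_lt hβle hP1lt
  have hβshift : Filter.Tendsto (fun n => P (n+1)) Filter.atTop (nhds β) :=
    hβ.comp (Filter.tendsto_add_atTop_nat 1)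
  have hrhs : Filter.Tendsto (fun n => P 1 - Δ₂ * (1 - P n ^ d₂)) Filter.atTop
      (nhds (P 1 - Δ₂ * (1 - β ^ d₂))) :=
    Filter.Tendsto.const_sub _ (Filter.Tendsto.const_mul _
      (Filter.Tendsto.const_sub _ (hβ.pow d₂)))
  have heq : β = P 1 - Δ₂ * (1 - β ^ d₂) := by
    refine tendsto_nhds_unique hβshift ?_
    simpa only [← hclosed] using hrhs
  have hpowle : β ^ d₂ ≤ β := by
    calc β ^ d₂ ≤ β ^ 1 := pow_le_pow_of_le_one hβ0 hβlt.le hd₂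
    _ = β := pow_one β
  rw [hP1] at heq
  have h1 : Δ₂ * (1 / Δ₁) ≤ β * (Δ₂ - 1) := by
    nlinarith [mul_nonneg hΔ₂.le (sub_nonneg.mpr hpowle)]
  have h2 : 1 / Δ₁ ≤ β * (1 - 1 / Δ₂) := by
    have hmul := mul_le_mul_of_nonneg_left h1 (one_div_pos.mpr hΔ₂).le
    have hb3 : β * (Δ₂ * (1 / Δ₂)) = β := by rw [hb2]; ring
    have hb4 : (1 / Δ₂) * (Δ₂ * (1 / Δ₁)) = 1 / Δ₁ := by field_simp
    nlinarith [hmul, hb3, hb4]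
  nlinarith [h2, one_div_pos.mpr hΔ₁, mul_nonneg hβ0 (le_of_lt (one_div_pos.mpr hΔ₂)),
    mul_pos (sub_pos.mpr hβlt) (one_div_pos.mpr hΔ₂)]
end

section
/- Let B ⊆ ℝ₊^M be partitioned by type with Bⱼ servers of type j, where dⱼ ≤ Bⱼ ≤ Nγⱼ. The function f(B₁,…,B_M) = (∏_{j=1}^M C(Bⱼ, dⱼ)) / (∑_{j=1}^M Bⱼ Cⱼ), where C(n,k) is the binomial coefficient and Cⱼ > 0, is nondecreasing in each Bⱼ. Consequently the maximum of f over dⱼ ≤ Bⱼ ≤ Nγⱼ is attained at Bⱼ = Nγⱼ for all j. -/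
open Finset

private lemma step_lemma {M : ℕ} (hM : 1 ≤ M) (d : Fin M → ℕ) (C : Fin M → ℝ)
    (hd : ∀ j, 1 ≤ d j) (hC : ∀ j, 0 < C j)
    (B : Fin M → ℕ) (hB : ∀ j, d j ≤ B j) (i : Fin M) :
    (∏ j, ((B j).choose (d j) : ℝ)) / (∑ j, (B j : ℝ) * C j) ≤
      (∏ j, ((Function.update B i (B i + 1) j).choose (d j) : ℝ)) /
        (∑ j, ((Function.update B i (B i + 1) j : ℕ) : ℝ) * C j) := by
  have hB1 : ∀ j, 1 ≤ B j := fun j => le_trans (hd j) (hB j)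
  set s : ℝ := ∑ j, (B j : ℝ) * C j with hs_def
  have hs_pos : 0 < s :=
    Finset.sum_pos (fun j _ => mul_pos (by exact_mod_cast hB1 j) (hC j)) ⟨⟨0, hM⟩, mem_univ _⟩
  have hs_i : (B i : ℝ) * C i ≤ s :=
    Finset.single_le_sum (f := fun j => (B j : ℝ) * C j)
      (fun j _ => le_of_lt (mul_pos (by exact_mod_cast hB1 j) (hC j))) (mem_univ i)
  have hsum' : ∑ j, ((Function.update B i (B i + 1) j : ℕ) : ℝ) * C j = s + C i := by
    rw [hs_def,
      ← Finset.add_sum_erase _ (fun j => ((Function.update B i (B i + 1) j : ℕ) : ℝ) * C j)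
        (mem_univ i),
      ← Finset.add_sum_erase _ (fun j => (B j : ℝ) * C j) (mem_univ i)]
    simp only [Function.update_self]
    have h : ∑ j ∈ univ.erase i, ((Function.update B i (B i + 1) j : ℕ) : ℝ) * C j
        = ∑ j ∈ univ.erase i, (B j : ℝ) * C j := by
      apply Finset.sum_congr rfl
      intro j hj
      rw [Function.update_of_ne (Finset.ne_of_mem_erase hj)]
    rw [h]
    push_cast
    ring
  set P : ℝ := ∏ j ∈ univ.erase i, ((B j).choose (d j) : ℝ) with hP_def
  have hP_pos : 0 < P :=
    Finset.prod_pos (fun j _ => by exact_mod_cast Nat.choose_pos (hB j))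
  have hprodB : ∏ j, ((B j).choose (d j) : ℝ) = ((B i).choose (d i) : ℝ) * P :=
    (Finset.mul_prod_erase _ _ (mem_univ i)).symm
  have hprodB' : ∏ j, ((Function.update B i (B i + 1) j).choose (d j) : ℝ)
      = ((B i + 1).choose (d i) : ℝ) * P := by
    rw [← Finset.mul_prod_erase _ _ (mem_univ i)]
    simp only [Function.update_self]
    congr 1
    apply Finset.prod_congr rfl
    intro j hj
    rw [Function.update_of_ne (Finset.ne_of_mem_erase hj)]
  rw [hprodB, hprodB', hsum']
  have hkb : d i ≤ B i := hB i
  have hk1 : 1 ≤ d i := hd i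
  set b := B i with hb_def
  set k := d i with hk_def
  have hA_pos : (0 : ℝ) < (b.choose k : ℝ) := by exact_mod_cast Nat.choose_pos hkb
  rw [div_le_div_iff₀ hs_pos (by linarith [hC i] : (0 : ℝ) < s + C i)]
  have ht1 : 1 ≤ b + 1 - k := by omega
  have ht_pos : (0 : ℝ) < ((b + 1 - k : ℕ) : ℝ) := by exact_mod_cast ht1
  have key : ((b + 1 - k : ℕ) : ℝ) * ((b + 1).choose k : ℝ) = ((b : ℝ) + 1) * (b.choose k : ℝ) := by
    have h := Nat.choose_mul_succ_eq b k
    have h2 : ((b.choose k * (b + 1) : ℕ) : ℝ) = (((b + 1).choose k * (b + 1 - k) : ℕ) : ℝ) := by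
      exact_mod_cast h
    push_cast at h2
    linarith [h2]
  have htb : ((b + 1 - k : ℕ) : ℝ) ≤ (b : ℝ) := by exact_mod_cast (by omega : b + 1 - k ≤ b)
  have hmain : (s + C i) * ((b + 1 - k : ℕ) : ℝ) ≤ ((b : ℝ) + 1) * s := by
    have h1 : C i * ((b + 1 - k : ℕ) : ℝ) ≤ C i * (b : ℝ) :=
      mul_le_mul_of_nonneg_left htb (hC i).le
    have h2 : C i * (b : ℝ) ≤ s := by rw [mul_comm]; exact hs_i
    have h3 : s ≤ (k : ℝ) * s := le_mul_of_one_le_left hs_pos.le (by exact_mod_cast hk1)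
    have hkt : ((b + 1 - k : ℕ) : ℝ) + (k : ℝ) = (b : ℝ) + 1 := by
      have h4 : (b + 1 - k) + k = b + 1 := by omega
      exact_mod_cast h4
    nlinarith [h1, h2, h3, hkt, hs_pos]
  apply le_of_mul_le_mul_left _ ht_pos
  calc ((b + 1 - k : ℕ) : ℝ) * ((b.choose k : ℝ) * P * (s + C i))
      = (b.choose k : ℝ) * P * ((s + C i) * ((b + 1 - k : ℕ) : ℝ)) := by ring
    _ ≤ (b.choose k : ℝ) * P * (((b : ℝ) + 1) * s) := by
        apply mul_le_mul_of_nonneg_left hmain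
        positivity
    _ = ((b + 1 - k : ℕ) : ℝ) * (((b + 1).choose k : ℝ) * P * s) := by
        linear_combination (-(P * s)) * key

private lemma mono_lemma {M : ℕ} (hM : 1 ≤ M) (d : Fin M → ℕ) (C : Fin M → ℝ)
    (hd : ∀ j, 1 ≤ d j) (hC : ∀ j, 0 < C j) :
    ∀ n (B B' : Fin M → ℕ), (∑ j, (B' j - B j)) = n →
      (∀ j, d j ≤ B j) → (∀ j, B j ≤ B' j) →
      (∏ j, ((B j).choose (d j) : ℝ)) / (∑ j, (B j : ℝ) * C j) ≤
        (∏ j, ((B' j).choose (d j) : ℝ)) / (∑ j, (B' j : ℝ) * C j) := by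
  intro n
  induction n with
  | zero =>
    intro B B' hsum hdB hBB'
    have hEq : B = B' := by
      funext j
      have h0 := Finset.sum_eq_zero_iff.mp hsum j (mem_univ j)
      have := hBB' j
      omega
    rw [hEq]
  | succ n ih =>
    intro B B' hsum hdB hBB'
    have hex : ∃ i, B i < B' i := by
      by_contra h
      push_neg at h
      have h0 : ∑ j, (B' j - B j) = 0 :=
        Finset.sum_eq_zero (fun j _ => by have := h j; omega)
      omega
    obtain ⟨i, hi⟩ := hex
    have hstep := step_lemma hM d C hd hC B hdB i
    refine le_trans hstep ?_
    have e1 : ∑ j, (B' j - Function.update B i (B i + 1) j)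
        = (B' i - (B i + 1)) + ∑ j ∈ univ.erase i, (B' j - B j) := by
      rw [← Finset.add_sum_erase _ (fun j => B' j - Function.update B i (B i + 1) j) (mem_univ i)]
      simp only [Function.update_self]
      congr 1
      apply Finset.sum_congr rfl
      intro j hj
      rw [Function.update_of_ne (Finset.ne_of_mem_erase hj)]
    have e2 : ∑ j, (B' j - B j) = (B' i - B i) + ∑ j ∈ univ.erase i, (B' j - B j) :=
      (Finset.add_sum_erase _ _ (mem_univ i)).symm
    apply ih (Function.update B i (B i + 1)) B'
    · omega
    · intro j
      rcases eq_or_ne j i with rfl | hji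
      · rw [Function.update_self]; exact le_trans (hdB j) (Nat.le_succ _)
      · rw [Function.update_of_ne hji]; exact hdB j
    · intro j
      rcases eq_or_ne j i with rfl | hji
      · rw [Function.update_self]; omega
      · rw [Function.update_of_ne hji]; exact hBB' j

/-- The function `f(B) = (∏ⱼ C(Bⱼ,dⱼ)) / (∑ⱼ BⱼCⱼ)` is nondecreasing in each
coordinate on `dⱼ ≤ Bⱼ ≤ Nγⱼ`; consequently its maximum over this range is
attained at `Bⱼ = Nγⱼ`. -/
theorem binom_ratio_monotone
    (M : ℕ) (hM : 1 ≤ M)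
    (d Nγ : Fin M → ℕ) (C : Fin M → ℝ)
    (hd : ∀ j, 1 ≤ d j) (hNγ : ∀ j, d j ≤ Nγ j) (hC : ∀ j, 0 < C j) :
    (∀ B B' : Fin M → ℕ,
        (∀ j, d j ≤ B j) → (∀ j, B j ≤ B' j) → (∀ j, B' j ≤ Nγ j) →
        (∏ j, ((B j).choose (d j) : ℝ)) / (∑ j, (B j : ℝ) * C j) ≤
          (∏ j, ((B' j).choose (d j) : ℝ)) / (∑ j, (B' j : ℝ) * C j)) ∧
    (∀ B : Fin M → ℕ, (∀ j, d j ≤ B j) → (∀ j, B j ≤ Nγ j) →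
        (∏ j, ((B j).choose (d j) : ℝ)) / (∑ j, (B j : ℝ) * C j) ≤
          (∏ j, ((Nγ j).choose (d j) : ℝ)) / (∑ j, (Nγ j : ℝ) * C j)) := by
  constructor
  · intro B B' h1 h2 _
    exact mono_lemma hM d C hd hC _ B B' rfl h1 h2
  · intro B h1 h2
    exact mono_lemma hM d C hd hC _ B Nγ rfl h1 h2
end

section
/- Let (q_k)_{1≤k≤n} be exchangeable random variables taking values in ℤ₊, let χ = (1/n)∑_{l=1}^n δ_{q_l} be the empirical measure, and let φ₁,…,φ_r : ℤ₊ → ℝ be bounded by B. Then |E[∏_{k=1}^r φ_k(q_k)] − E[∏_{k=1}^r ⟨φ_k, χ⟩]| ≤ 2·B^r·(1 − (n)_r/n^r), where ⟨φ, χ⟩ = (1/n)∑_l φ(q_l) and (n)_r is the falling factorial. -/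
open MeasureTheory ProbabilityTheory Finset

/-!
Expanding the product of empirical averages turns `E[∏ₖ ⟨φₖ, χ⟩]` into the average, over all
`nʳ` maps `f : Fin r → Fin n`, of `E[∏ₖ φₖ(q_{f k})]`. By exchangeability this equals
`E[∏ₖ φₖ(qₖ)]` for each of the `(n)ᵣ` injective `f`, and each of the remaining terms differs
from it by at most `2 Bʳ`.
-/

theorem abs_sub_sum_div_card_le {β : Type*} {s : Finset β} (hs : s.Nonempty) (p : β → Prop)
    [DecidablePred p] {T : β → ℝ} {t C : ℝ} (hT : ∀ b ∈ s, |T b| ≤ C) (ht : |t| ≤ C)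
    (hp : ∀ b ∈ s, p b → T b = t) :
    |t - (∑ b ∈ s, T b) / #s| ≤ 2 * C * (1 - #(s.filter p) / #s) := by
  have hs' : (#s : ℝ) ≠ 0 := by exact_mod_cast hs.card_pos.ne'
  have hdiff : t - (∑ b ∈ s, T b) / #s = (∑ b ∈ s.filter (¬ p ·), (t - T b)) / #s := by
    have hvanish : ∀ b ∈ s, t - T b ≠ 0 → ¬ p b := fun b hb hne hpb =>
      hne (by rw [hp b hb hpb, sub_self])
    rw [sum_filter_of_ne hvanish, sum_sub_distrib, sum_const, nsmul_eq_mul]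
    field_simp
  have hcompl : (#(s.filter (¬ p ·)) : ℝ) = #s - #(s.filter p) := by
    rw [eq_sub_iff_add_eq, add_comm]
    exact_mod_cast card_filter_add_card_filter_not p
  calc |t - (∑ b ∈ s, T b) / #s|
      = |∑ b ∈ s.filter (¬ p ·), (t - T b)| / #s := by rw [hdiff, abs_div, Nat.abs_cast]
    _ ≤ #(s.filter (¬ p ·)) * (2 * C) / #s := by
        gcongr
        refine (abs_sum_le_sum_abs _ _).trans ?_
        rw [← nsmul_eq_mul]
        refine sum_le_card_nsmul _ _ _ fun b hb => ?_
        linarith [abs_sub t (T b), hT b (mem_filter.1 hb).1]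
    _ = 2 * C * (1 - #(s.filter p) / #s) := by
        rw [hcompl]
        field_simp

theorem abs_prod_le_pow_card {κ : Type*} [Fintype κ] {a : κ → ℝ} {B : ℝ} (h : ∀ k, |a k| ≤ B) :
    |∏ k, a k| ≤ B ^ Fintype.card κ := by
  rw [abs_prod, ← card_univ, ← prod_const]
  exact prod_le_prod (fun _ _ => abs_nonneg _) fun k _ => h k

theorem abs_integral_le_of_forall_abs_le {Ω : Type*} [MeasurableSpace Ω] {μ : Measure Ω}
    [IsProbabilityMeasure μ] {f : Ω → ℝ} {C : ℝ} (h : ∀ ω, |f ω| ≤ C) :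
    |∫ ω, f ω ∂μ| ≤ C := by
  simpa using norm_integral_le_of_norm_le_const (μ := μ)
    (ae_of_all _ fun ω => (Real.norm_eq_abs (f ω)).trans_le (h ω))

namespace ProbabilityTheory

def Exchangeable {Ω ι α : Type*} [MeasurableSpace Ω] [MeasurableSpace α] (X : ι → Ω → α)
    (μ : Measure Ω) : Prop :=
  ∀ σ : Equiv.Perm ι, μ.map (fun ω i => X (σ i) ω) = μ.map (fun ω i => X i ω)

theorem Exchangeable.identDistrib_comp_of_injective {Ω ι κ α : Type*} [MeasurableSpace Ω]
    [MeasurableSpace α] [Finite κ] {μ : Measure Ω} {X : ι → Ω → α} (hX : Exchangeable X μ)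
    (hmeas : ∀ i, Measurable (X i)) {f g : κ → ι} (hf : f.Injective) (hg : g.Injective) :
    IdentDistrib (fun ω k => X (f k) ω) (fun ω k => X (g k) ω) μ μ := by
  obtain ⟨σ, hσ⟩ := Equiv.Perm.exists_extending_pair g f hg hf
  have hσX : IdentDistrib (fun ω i => X (σ i) ω) (fun ω i => X i ω) μ μ :=
    ⟨(measurable_pi_lambda _ fun i => hmeas (σ i)).aemeasurable,
      (measurable_pi_lambda _ hmeas).aemeasurable, hX σ⟩
  simpa only [Function.comp_def, hσ] using
    hσX.comp (measurable_pi_lambda _ fun k => measurable_pi_apply (g k))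

end ProbabilityTheory

theorem exchangeable_empirical_estimate_general
    {Ω : Type*} [MeasurableSpace Ω] (μ : Measure Ω) [IsProbabilityMeasure μ]
    (n r : ℕ) (hrn : r ≤ n)
    (q : Fin n → Ω → ℕ) (hq : ∀ k, Measurable (q k))
    (hexch : ∀ σ : Equiv.Perm (Fin n),
      Measure.map (fun ω => fun k => q (σ k) ω) μ =
        Measure.map (fun ω => fun k => q k ω) μ)
    (φ : Fin r → ℕ → ℝ) (B : ℝ) (hB : ∀ k m, |φ k m| ≤ B) :
    |(∫ ω, ∏ k : Fin r, φ k (q (Fin.castLE hrn k) ω) ∂μ) -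
        ∫ ω, ∏ k : Fin r, ((1 : ℝ) / n) * ∑ l : Fin n, φ k (q l ω) ∂μ| ≤
      2 * B ^ r * (1 - (n.descFactorial r : ℝ) / (n : ℝ) ^ r) := by
  let F : (Fin r → ℕ) → ℝ := fun x => ∏ k, φ k (x k)
  have hF : Measurable F :=
    Finset.measurable_prod _ fun k _ => measurable_from_nat.comp (measurable_pi_apply k)
  have hF_le (x) : |F x| ≤ B ^ r := by simpa using abs_prod_le_pow_card fun k => hB k (x k)
  let T : (Fin r → Fin n) → ℝ := fun f => ∫ ω, F (fun k => q (f k) ω) ∂μ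
  have hT_le (f) : |T f| ≤ B ^ r := abs_integral_le_of_forall_abs_le fun ω => hF_le _
  have hT_inj (f : Fin r → Fin n) (hf : f.Injective) : T f = T (Fin.castLE hrn) :=
    ((Exchangeable.identDistrib_comp_of_injective hexch hq hf
      (Fin.castLE_injective hrn)).comp hF).integral_eq
  have hempirical : ∫ ω, ∏ k, (1 / n : ℝ) * ∑ l, φ k (q l ω) ∂μ =
      (∑ f, T f) / #(univ : Finset (Fin r → Fin n)) := by
    have hint (f : Fin r → Fin n) : Integrable (fun ω => F (fun k => q (f k) ω)) μ :=
      .of_bound (hF.comp (measurable_pi_lambda _ fun k => hq (f k))).aestronglyMeasurable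
        (B ^ r) (ae_of_all _ fun ω => (Real.norm_eq_abs _).trans_le (hF_le _))
    simp_rw [prod_mul_distrib, prod_const, prod_univ_sum]
    rw [integral_const_mul, integral_finsetSum _ fun f _ => hint f]
    simp [div_eq_inv_mul, T, F]
  have hcard : #(univ.filter fun f : Fin r → Fin n => f.Injective) = n.descFactorial r := by
    rw [← Fintype.card_subtype, Fintype.card_congr (Equiv.subtypeInjectiveEquivEmbedding _ _)]
    simp [Fintype.card_embedding_eq]
  have key := abs_sub_sum_div_card_le ⟨Fin.castLE hrn, mem_univ _⟩ (fun f => f.Injective)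
    (fun f _ => hT_le f) (hT_le _) fun f _ hf => hT_inj f hf
  rw [hempirical]
  simpa [hcard] using key

/-- Key estimate for propagation of chaos (single-class version): for
exchangeable ℤ₊-valued random variables `q₁,…,qₙ` with empirical measure `χ`,
and bounded test functions `φ₁,…,φᵣ`,
`|E[∏ₖ φₖ(qₖ)] − E[∏ₖ ⟨φₖ, χ⟩]| ≤ 2 Bʳ (1 − (n)ᵣ/nʳ)`. -/
theorem exchangeable_empirical_estimate
    {Ω : Type*} [MeasurableSpace Ω] (μ : Measure Ω) [IsProbabilityMeasure μ]
    (n r : ℕ) (hr : 1 ≤ r) (hrn : r ≤ n)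
    (q : Fin n → Ω → ℕ) (hq : ∀ k, Measurable (q k))
    (hexch : ∀ σ : Equiv.Perm (Fin n),
      Measure.map (fun ω => fun k => q (σ k) ω) μ =
        Measure.map (fun ω => fun k => q k ω) μ)
    (φ : Fin r → ℕ → ℝ) (B : ℝ) (hB : ∀ k m, |φ k m| ≤ B) :
    |(∫ ω, ∏ k : Fin r, φ k (q (Fin.castLE hrn k) ω) ∂μ) -
        ∫ ω, ∏ k : Fin r, ((1 : ℝ) / n) * ∑ l : Fin n, φ k (q l ω) ∂μ| ≤
      2 * B ^ r * (1 - (n.descFactorial r : ℝ) / (n : ℝ) ^ r) :=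
  exchangeable_empirical_estimate_general μ n r hrn q hq hexch φ B hB
end

section
/- Let g ∈ Ū^M (each coordinate sequence nonincreasing, starting at 1, valued in [0,1]) and suppose u(t) solves u'(t) = l(u(t)), u(0) = g, where l is the Scheme-1 mean-field vector field: l_0^{(j)}(u) = 0 and l_k^{(j)}(u) = (λ/γⱼ)((u_{k−1}^{(j)})^{dⱼ} − (u_k^{(j)})^{dⱼ})·∏_{i<j}(u_{k−1}^{(i)})^{d_i}·∏_{i>j}(u_k^{(i)})^{d_i} − μCⱼ(u_k^{(j)} − u_{k+1}^{(j)}) for k ≥ 1. If at some time t, u_n^{(j)}(t) = u_{n+1}^{(j)}(t) for some j and n ≥ 1, then l_n^{(j)}(u(t)) ≥ 0 and l_{n+1}^{(j)}(u(t)) ≤ 0; and if u_n^{(j)}(t) = 0 then l_n^{(j)}(u(t)) ≥ 0. -/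
open Finset

/-- The Scheme-1 mean-field vector field `l`: `l_0^{(j)}(u) = 0` and, for `k ≥ 1`,
`l_k^{(j)}(u) = (λ/γⱼ)((u_{k−1}^{(j)})^{dⱼ} − (u_k^{(j)})^{dⱼ})
  ∏_{i<j}(u_{k−1}^{(i)})^{dᵢ} ∏_{i>j}(u_k^{(i)})^{dᵢ} − μCⱼ(u_k^{(j)} − u_{k+1}^{(j)})`. -/
noncomputable def meanFieldL {M : ℕ} (lam mu : ℝ) (γ C : Fin M → ℝ) (d : Fin M → ℕ)
    (u : Fin M → ℕ → ℝ) (j : Fin M) : ℕ → ℝ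
  | 0 => 0
  | (k + 1) =>
      (lam / γ j) * ((u j k) ^ (d j) - (u j (k + 1)) ^ (d j)) *
          (∏ i ∈ univ.filter (fun i => i < j), (u i k) ^ (d i)) *
          (∏ i ∈ univ.filter (fun i => j < i), (u i (k + 1)) ^ (d i)) -
        mu * C j * (u j (k + 1) - u j (k + 2))

/-- Invariance of `Ū^M` under the Scheme-1 mean-field dynamics: at any state
`u ∈ Ū^M`, if `u_n^{(j)} = u_{n+1}^{(j)}` (for `n ≥ 1`) then
`l_n^{(j)}(u) ≥ 0` and `l_{n+1}^{(j)}(u) ≤ 0`; and if `u_n^{(j)} = 0` then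
`l_n^{(j)}(u) ≥ 0`. -/
theorem meanField_boundary_invariance
    (M : ℕ) (hM : 1 ≤ M) (lam mu : ℝ) (hlam : 0 < lam) (hmu : 0 < mu)
    (γ C : Fin M → ℝ) (d : Fin M → ℕ)
    (hγ : ∀ j, 0 < γ j ∧ γ j ≤ 1) (hC : ∀ j, 0 < C j) (hd : ∀ j, 1 ≤ d j)
    (u : Fin M → ℕ → ℝ)
    (hu0 : ∀ j, u j 0 = 1)
    (humono : ∀ j k, u j (k + 1) ≤ u j k) (hupos : ∀ j k, 0 ≤ u j k) :
    (∀ j, ∀ n : ℕ, 1 ≤ n → u j n = u j (n + 1) →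
        0 ≤ meanFieldL lam mu γ C d u j n ∧
          meanFieldL lam mu γ C d u j (n + 1) ≤ 0) ∧
    (∀ j, ∀ n : ℕ, 1 ≤ n → u j n = 0 → 0 ≤ meanFieldL lam mu γ C d u j n) := by

  have key : ∀ (j : Fin M) (k : ℕ),
      0 ≤ (lam / γ j) * ((u j k) ^ (d j) - (u j (k + 1)) ^ (d j)) *
          (∏ i ∈ univ.filter (fun i => i < j), (u i k) ^ (d i)) *
          (∏ i ∈ univ.filter (fun i => j < i), (u i (k + 1)) ^ (d i)) := by
    intro j k
    apply mul_nonneg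
    apply mul_nonneg
    apply mul_nonneg
    · exact div_nonneg hlam.le (hγ j).1.le
    · exact sub_nonneg.mpr (pow_le_pow_left₀ (hupos j (k+1)) (humono j k) _)
    · exact Finset.prod_nonneg fun i _ => pow_nonneg (hupos i k) _
    · exact Finset.prod_nonneg fun i _ => pow_nonneg (hupos i (k+1)) _
  constructor
  · intro j n hn heq
    obtain ⟨m, rfl⟩ : ∃ m, n = m + 1 := ⟨n - 1, (Nat.succ_pred_eq_of_pos hn).symm⟩
    constructor
    · show 0 ≤ _ - mu * C j * (u j (m+1) - u j (m+2))
      have : u j (m+1) - u j (m+2) = 0 := by rw [heq]; ring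
      rw [this, mul_zero, sub_zero]
      exact key j m
    · show _ - mu * C j * (u j (m+2) - u j (m+3)) ≤ 0
      have h1 : (u j (m+1)) ^ (d j) - (u j (m+2)) ^ (d j) = 0 := by rw [heq]; ring
      rw [h1, mul_zero, zero_mul, zero_mul, zero_sub, neg_nonpos]
      exact mul_nonneg (mul_nonneg hmu.le (hC j).le)
        (sub_nonneg.mpr (humono j (m+2)))
  · intro j n hn h0
    obtain ⟨m, rfl⟩ : ∃ m, n = m + 1 := ⟨n - 1, (Nat.succ_pred_eq_of_pos hn).symm⟩
    show 0 ≤ _ - mu * C j * (u j (m+1) - u j (m+2))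
    have h2 : u j (m+2) = 0 :=
      le_antisymm (h0 ▸ humono j (m+1)) (hupos j (m+2))
    have h3 : u j (m+1) - u j (m+2) = 0 := by rw [h0, h2]; ring
    rw [h3, mul_zero, sub_zero]
    exact key j m
end

section
/- Suppose P = (P_k^{(j)})_{k≥0, 1≤j≤M} satisfies the Scheme-1 equilibrium recursion P_{k+1}^{(j)} − P_{k+2}^{(j)} = Δⱼ((P_k^{(j)})^{dⱼ} − (P_{k+1}^{(j)})^{dⱼ})·∏_{i<j}(P_k^{(i)})^{d_i}·∏_{i>j}(P_{k+1}^{(i)})^{d_i} for all k ≥ 0 and j, with P_0^{(j)} = 1, all P_k^{(j)} ∈ [0,1] nonincreasing in k, and P_k^{(j)} → 0 as k → ∞ for each j. Then for every l ≥ 0: ∑_{j=1}^M P_{l+1}^{(j)}/Δⱼ = ∏_{j=1}^M (P_l^{(j)})^{dⱼ}. -/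
/-!
Divided by `Δⱼ` and summed over `j`, the right-hand sides of the recursion telescope in `j`
(the factors switch from time `k` to time `k + 1` one index at a time), so the sequences
`∑ⱼ P_{k+1}^{(j)}/Δⱼ` and `∏ⱼ (P_k^{(j)})^{dⱼ}` have the same increments. Both tend to `0`,
hence they are equal.
-/

open Finset Filter Topology

theorem Finset.prod_sub_prod_ordered {ι R : Type*} [CommRing R] [LinearOrder ι]
    (s : Finset ι) (f g : ι → R) :
    ∏ i ∈ s, f i - ∏ i ∈ s, g i =
      ∑ i ∈ s, (f i - g i) * (∏ j ∈ s with j < i, f j) * ∏ j ∈ s with i < j, g j := by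
  have h := prod_add_ordered s g fun i => f i - g i
  simp only [add_sub_cancel] at h
  rw [h, add_sub_cancel_left]

theorem eq_of_sub_succ_eq_of_tendsto {G : Type*} [AddCommGroup G] [TopologicalSpace G]
    [IsTopologicalAddGroup G] [T2Space G] {a b : ℕ → G} {x : G}
    (h : ∀ k, a k - a (k + 1) = b k - b (k + 1))
    (ha : Tendsto a atTop (𝓝 x)) (hb : Tendsto b atTop (𝓝 x)) : a = b := by
  have hconst : ∀ n, a n - b n = a 0 - b 0 := by
    intro n
    induction n with
    | zero => rfl
    | succ n ih => rw [← ih]; exact (sub_eq_sub_iff_sub_eq_sub.mpr (h n)).symm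
  have hlim : Tendsto (fun n => a n - b n) atTop (𝓝 (x - x)) := ha.sub hb
  simp only [hconst, sub_self, tendsto_const_nhds_iff, sub_eq_zero] at hlim
  funext n
  rw [← sub_eq_zero, hconst, hlim, sub_self]

theorem coupling_identity_of_equilibrium_general
    (M : ℕ) (hM : 1 ≤ M)
    (Δ : Fin M → ℝ) (d : Fin M → ℕ) (P : Fin M → ℕ → ℝ)
    (hΔ : ∀ j, 0 < Δ j) (hd : ∀ j, 1 ≤ d j)
    (hrec : ∀ (j : Fin M) (k : ℕ),
        P j (k + 1) - P j (k + 2) =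
          Δ j * ((P j k) ^ (d j) - (P j (k + 1)) ^ (d j)) *
            (∏ i ∈ univ.filter (fun i => i < j), (P i k) ^ (d i)) *
            (∏ i ∈ univ.filter (fun i => j < i), (P i (k + 1)) ^ (d i)))
    (hlim : ∀ j, Tendsto (fun k => P j k) atTop (nhds 0)) :
    ∀ l : ℕ, ∑ j, P j (l + 1) / Δ j = ∏ j, (P j l) ^ (d j) := by
  have hstep : ∀ k, ∑ j, P j (k + 1) / Δ j - ∑ j, P j (k + 1 + 1) / Δ j =
      ∏ j, P j k ^ d j - ∏ j, P j (k + 1) ^ d j := by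
    intro k
    rw [← sum_sub_distrib, prod_sub_prod_ordered]
    refine sum_congr rfl fun j _ => ?_
    rw [← sub_div, hrec, div_eq_iff (hΔ j).ne']
    ring
  have hsum : Tendsto (fun k => ∑ j, P j (k + 1) / Δ j) atTop (𝓝 0) := by
    simpa using tendsto_finsetSum univ fun j _ =>
      ((hlim j).comp (tendsto_add_atTop_nat 1)).div_const (Δ j)
  have hprod : Tendsto (fun k => ∏ j, P j k ^ d j) atTop (𝓝 0) := by
    have hzero : ∏ j, (0 : ℝ) ^ d j = 0 :=
      prod_eq_zero (mem_univ ⟨0, hM⟩) (zero_pow (Nat.one_le_iff_ne_zero.mp (hd _)))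
    simpa only [hzero] using tendsto_finsetProd univ fun j _ => (hlim j).pow (d j)
  exact congrFun (eq_of_sub_succ_eq_of_tendsto hstep hsum hprod)

/-- From the Scheme-1 equilibrium recursion with vanishing tails one obtains
the coupling identity `∑ⱼ P_{l+1}^{(j)}/Δⱼ = ∏ⱼ (P_l^{(j)})^{dⱼ}`. -/
theorem coupling_identity_of_equilibrium
    (M : ℕ) (hM : 1 ≤ M)
    (Δ : Fin M → ℝ) (d : Fin M → ℕ) (P : Fin M → ℕ → ℝ)
    (hΔ : ∀ j, 0 < Δ j) (hd : ∀ j, 1 ≤ d j)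
    (hP0 : ∀ j, P j 0 = 1)
    (hPmem : ∀ j k, P j k ∈ Set.Icc (0 : ℝ) 1)
    (hPmono : ∀ j k, P j (k + 1) ≤ P j k)
    (hrec : ∀ (j : Fin M) (k : ℕ),
        P j (k + 1) - P j (k + 2) =
          Δ j * ((P j k) ^ (d j) - (P j (k + 1)) ^ (d j)) *
            (∏ i ∈ univ.filter (fun i => i < j), (P i k) ^ (d i)) *
            (∏ i ∈ univ.filter (fun i => j < i), (P i (k + 1)) ^ (d i)))
    (hlim : ∀ j, Tendsto (fun k => P j k) atTop (nhds 0)) :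
    ∀ l : ℕ, ∑ j, P j (l + 1) / Δ j = ∏ j, (P j l) ^ (d j) :=
  coupling_identity_of_equilibrium_general M hM Δ d P hΔ hd hrec hlim
end
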